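/- The element t = Σ_{i=0}^{mn-1} g^i x^{n-1} is a left integral in the Radford Hopf algebra R = R_{mn}(q): for every h ∈ R one has h·t = ε(h)·t. Moreover, the space of left integrals of R is one-dimensional, spanned by t. -/

import Mathlib

open scoped TensorProduct

private theorem radford_shift1 {M : Type*} [AddCommGroup M] (f : ℕ → M) (N : ℕ)
    (h : f N = f 0) :
    ∑ i ∈ Finset.range N, f (i+1) = ∑ i ∈ Finset.range N, f i := by
  have h1 := Finset.sum_range_succ' f N
  have h2 := Finset.sum_range_succ f N
  rw [h2, h] at h1
  exact (add_right_cancel h1).symm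

private theorem radford_shiftk {M : Type*} [AddCommGroup M] (f : ℕ → M) (N : ℕ)
    (hf : ∀ i, f (i + N) = f i) (k : ℕ) :
    ∑ i ∈ Finset.range N, f (i + k) = ∑ i ∈ Finset.range N, f i := by
  induction k with
  | zero => simp
  | succ k ih =>
    have h1 : ∀ i, i + (k+1) = (i+1) + k := by omega
    calc ∑ i ∈ Finset.range N, f (i + (k+1))
        = ∑ i ∈ Finset.range N, (fun j => f (j + k)) (i+1) := by
          simp only [h1]
      _ = ∑ i ∈ Finset.range N, f (i + k) := by
          apply radford_shift1 (fun j => f (j + k)) N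
          show f (N + k) = f (0 + k)
          rw [add_comm N k, hf, zero_add]
      _ = ∑ i ∈ Finset.range N, f i := ih

/-- `t = Σ_{i=0}^{mn-1} g^i x^{n-1}` is a left integral in the Radford
Hopf algebra `R = R_{mn}(q)` (`h·t = ε(h)·t` for all `h`), and the space of left
integrals of `R` is one-dimensional, spanned by `t`. -/
theorem radford_left_integral (K : Type*) [Field K] [IsAlgClosed K]
    (m n : ℕ) (hm : 2 ≤ m) (hn : 1 ≤ n) (hchar : ¬ (ringChar K ∣ m * n))
    (q : K) (hq : IsPrimitiveRoot q n)
    (R : Type*) [Ring R] [HopfAlgebra K R] (g x : R)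
    (hgo : g ^ (m * n) = 1) (hxn : x ^ n = g ^ n - 1) (hxg : x * g = q • (g * x))
    (B : Module.Basis (Fin (m * n) × Fin n) K R)
    (hB : ∀ p : Fin (m * n) × Fin n, B p = g ^ (p.1 : ℕ) * x ^ (p.2 : ℕ))
    (hcg : Coalgebra.comul (R := K) g = g ⊗ₜ[K] g)
    (hcx : Coalgebra.comul (R := K) x = x ⊗ₜ[K] g + 1 ⊗ₜ[K] x)
    (heg : Coalgebra.counit (R := K) g = (1 : K))
    (hex : Coalgebra.counit (R := K) x = (0 : K)) :
    (∑ i ∈ Finset.range (m * n), g ^ i * x ^ (n - 1)) ≠ 0 ∧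
    (∀ h : R, h * (∑ i ∈ Finset.range (m * n), g ^ i * x ^ (n - 1)) =
      Coalgebra.counit (R := K) h • (∑ i ∈ Finset.range (m * n), g ^ i * x ^ (n - 1))) ∧
    {t' : R | ∀ h : R, h * t' = Coalgebra.counit (R := K) h • t'} =
      ↑(Submodule.span K {∑ i ∈ Finset.range (m * n), g ^ i * x ^ (n - 1)}) := by
  have hN2 : 2 ≤ m * n := le_trans hm (Nat.le_mul_of_pos_right m (by omega))
  have hN0 : 0 < m * n := by omega
  haveI : NeZero (m * n) := ⟨by omega⟩
  -- basic powers
  have hqn : q ^ n = 1 := hq.pow_eq_one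
  have hq0 : q ≠ 0 := hq.ne_zero (by omega)
  have hqmn : q ^ (m * n) = 1 := by rw [mul_comm m n, pow_mul, hqn, one_pow]
  have hgper : ∀ i : ℕ, g ^ (i + m * n) = g ^ i := by
    intro i; rw [pow_add, hgo, mul_one]
  have hqper : ∀ i : ℕ, q ^ (i + m * n) = q ^ i := by
    intro i; rw [pow_add, hqmn, mul_one]
  have gmod : ∀ a : ℕ, g ^ (a % (m * n)) = g ^ a := by
    intro a
    conv_rhs => rw [← Nat.div_add_mod a (m * n)]
    rw [pow_add, pow_mul, hgo, one_pow, one_mul]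
  -- x past powers of g
  have xgpow : ∀ i : ℕ, x * g ^ i = q ^ i • (g ^ i * x) := by
    intro i; induction i with
    | zero => simp
    | succ i ih =>
      rw [pow_succ, ← mul_assoc, ih, smul_mul_assoc, mul_assoc, hxg, mul_smul_comm,
        smul_smul, ← mul_assoc, ← pow_succ, pow_succ q, mul_comm (q ^ i) q, mul_comm q (q^i)]
  -- the family T j and t
  set T : ℕ → R := fun j => ∑ i ∈ Finset.range (m * n), g ^ i * x ^ j with hT
  set t : R := ∑ i ∈ Finset.range (m * n), g ^ i * x ^ (n - 1) with ht
  have htT : t = T (n - 1) := rfl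
  -- g * t = t
  have gT : ∀ j : ℕ, g * T j = T j := by
    intro j
    have : g * T j = ∑ i ∈ Finset.range (m * n), (fun i => g ^ i * x ^ j) (i + 1) := by
      rw [hT, Finset.mul_sum]
      refine Finset.sum_congr rfl fun i _ => ?_
      rw [← mul_assoc, ← pow_succ']
    rw [this]
    exact radford_shift1 (fun i => g ^ i * x ^ j) (m * n) (by show g ^ (m * n) * x ^ j = g ^ 0 * x ^ j; rw [hgo, pow_zero])
  have gt : g * t = t := gT (n - 1)
  -- x * T j
  have xT : ∀ j : ℕ, x * T j = ∑ i ∈ Finset.range (m * n), q ^ i • (g ^ i * x ^ (j + 1)) := by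
    intro j
    rw [hT, Finset.mul_sum]
    refine Finset.sum_congr rfl fun i _ => ?_
    rw [← mul_assoc, xgpow, smul_mul_assoc, mul_assoc, ← pow_succ']
  -- x * t = 0
  have xt : x * t = 0 := by
    have h1 : x * t = ∑ i ∈ Finset.range (m * n), q ^ i • (g ^ i * x ^ n) := by
      rw [htT, xT]
      have : n - 1 + 1 = n := by omega
      rw [this]
    have h2 : ∀ i : ℕ, q ^ i • (g ^ i * x ^ n) =
        (fun a => q ^ a • g ^ a) (i + n) - q ^ i • g ^ i := by
      intro i
      have : q ^ (i + n) = q ^ i := by rw [pow_add, hqn, mul_one]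
      simp only [this, hxn, mul_sub, mul_one, ← pow_add, smul_sub]
    rw [h1]
    simp only [h2]
    rw [Finset.sum_sub_distrib]
    rw [radford_shiftk (fun a => q ^ a • g ^ a) (m * n) (fun i => by simp [hqper, hgper]) n]
    exact sub_self _
  -- powers acting on t
  have gpt : ∀ i : ℕ, g ^ i * t = t := by
    intro i; induction i with
    | zero => rw [pow_zero, one_mul]
    | succ i ih => rw [pow_succ', mul_assoc, ih, gt]
  have xpt : ∀ j : ℕ, x ^ (j + 1) * t = 0 := by
    intro j; rw [pow_succ, mul_assoc, xt, mul_zero]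
  -- counit is multiplicative
  have ce : ∀ r s : R, Coalgebra.counit (R := K) (r * s)
      = Coalgebra.counit (R := K) r * Coalgebra.counit (R := K) s :=
    fun r s => map_mul (Bialgebra.counitAlgHom K R) r s
  have cpow : ∀ (r : R) (k : ℕ), Coalgebra.counit (R := K) (r ^ k)
      = Coalgebra.counit (R := K) r ^ k :=
    fun r k => map_pow (Bialgebra.counitAlgHom K R) r k
  -- the integral property
  have hint : ∀ h : R, h * t = Coalgebra.counit (R := K) h • t := by
    have L0 : (LinearMap.mulRight K t - LinearMap.smulRight
        (Coalgebra.counit : R →ₗ[K] K) t) = 0 := by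
      apply B.ext
      rintro ⟨i, j⟩
      rw [hB]
      simp only [LinearMap.sub_apply, LinearMap.mulRight_apply, LinearMap.smulRight_apply,
        LinearMap.zero_apply]
      rcases Nat.eq_zero_or_pos (j : ℕ) with hj | hj
      · rw [hj, pow_zero, mul_one, gpt, cpow, heg, one_pow, one_smul, sub_self]
      · obtain ⟨k, hk⟩ : ∃ k, (j : ℕ) = k + 1 := ⟨(j : ℕ) - 1, by omega⟩
        rw [hk, mul_assoc, xpt, mul_zero, ce, cpow, cpow, heg, hex]
        simp
    intro h
    have := congrFun (congrArg (fun f => f.toFun) L0) h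
    simp only [LinearMap.toFun_eq_coe, LinearMap.sub_apply, LinearMap.mulRight_apply, LinearMap.smulRight_apply,
      LinearMap.zero_apply] at this
    exact sub_eq_zero.mp this
  -- t as a sum of basis vectors
  have tsum : t = ∑ i : Fin (m * n), B (i, ⟨n - 1, by omega⟩) := by
    rw [ht, ← Fin.sum_univ_eq_sum_range (fun i => g ^ i * x ^ (n - 1)) (m * n)]
    exact Finset.sum_congr rfl fun i _ => (hB (i, ⟨n - 1, by omega⟩)).symm
  have coord_t : B.coord (0, ⟨n - 1, by omega⟩) t = 1 := by
    rw [tsum, map_sum]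
    have hco : ∀ i : Fin (m * n),
        B.coord (0, ⟨n - 1, by omega⟩) (B (i, ⟨n - 1, by omega⟩))
          = if i = 0 then (1 : K) else 0 := by
      intro i
      rw [Module.Basis.coord_apply, Module.Basis.repr_self, Finsupp.single_apply]
      simp [Prod.ext_iff]
    simp only [hco]
    simp
  have tne : t ≠ 0 := by
    intro h0
    rw [h0, map_zero] at coord_t
    exact zero_ne_one coord_t
  refine ⟨tne, hint, ?_⟩
  ext t'
  simp only [Set.mem_setOf_eq, SetLike.mem_coe]
  constructor
  · intro ht'
    have hg' : g * t' = t' := by rw [ht' g, heg, one_smul]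
    have hx' : x * t' = 0 := by rw [ht' x, hex, zero_smul]
    set c : Fin (m * n) × Fin n → K := fun p => B.repr t' p with hc
    have hrepr : ∑ p : Fin (m * n) × Fin n, c p • B p = t' := B.sum_repr t'
    set σ : (Fin (m * n) × Fin n) ≃ (Fin (m * n) × Fin n) :=
      (Equiv.addRight (1 : Fin (m * n))).prodCongr (Equiv.refl (Fin n)) with hσ
    have gB : ∀ (i : Fin (m * n)) (j : Fin n), g * B (i, j) = B (i + 1, j) := by
      intro i j
      rw [hB, hB]
      show g * (g ^ (i : ℕ) * x ^ (j : ℕ)) = g ^ ((i + 1 : Fin (m * n)) : ℕ) * x ^ (j : ℕ)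
      have hval : ((i + 1 : Fin (m * n)) : ℕ) = ((i : ℕ) + 1) % (m * n) := by
        rw [Fin.val_add, Fin.val_one']
        rw [Nat.mod_eq_of_lt (show 1 < m * n by omega)]
      rw [hval, gmod, ← mul_assoc, ← pow_succ']
    have e1 : ∑ p : Fin (m * n) × Fin n, c p • B (σ p)
        = ∑ p : Fin (m * n) × Fin n, c p • B p := by
      have eL : ∑ p : Fin (m * n) × Fin n, c p • B (σ p) = t' := by
        calc ∑ p : Fin (m * n) × Fin n, c p • B (σ p)
            = ∑ p : Fin (m * n) × Fin n, c p • (g * B p) := by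
              refine Finset.sum_congr rfl fun p _ => ?_
              obtain ⟨i, j⟩ := p
              rw [gB]
              rfl
          _ = g * ∑ p : Fin (m * n) × Fin n, c p • B p := by
              rw [Finset.mul_sum]
              exact Finset.sum_congr rfl fun p _ => (mul_smul_comm _ _ _).symm
          _ = t' := by rw [hrepr, hg']
      exact eL.trans hrepr.symm
    have e2 : ∑ p : Fin (m * n) × Fin n, c (σ.symm p) • B p
        = ∑ p : Fin (m * n) × Fin n, c p • B p := by
      have h := Equiv.sum_comp σ (fun p => c (σ.symm p) • B p)
      simp only [Equiv.symm_apply_apply] at h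
      exact h.symm.trans e1
    have e3 : ∀ p, c (σ.symm p) = c p := by
      have hz : ∑ p : Fin (m * n) × Fin n, (c (σ.symm p) - c p) • B p = 0 := by
        simp only [sub_smul]
        rw [Finset.sum_sub_distrib, e2, sub_self]
      intro p
      exact sub_eq_zero.mp (Fintype.linearIndependent_iff.mp B.linearIndependent _ hz p)
    have cstep : ∀ (i : Fin (m * n)) (j : Fin n), c (i + 1, j) = c (i, j) := by
      intro i j
      have h := e3 (i + 1, j)
      have hs : σ.symm (i + 1, j) = (i, j) := by
        simp [hσ]
      rw [hs] at h
      exact h.symm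
    open Fin.NatCast in
    have cconst : ∀ (i : Fin (m * n)) (j : Fin n), c (i, j) = c (0, j) := by
      intro i j
      have key : ∀ k : ℕ, c ((k : Fin (m * n)), j) = c (0, j) := by
        intro k
        induction k with
        | zero => norm_num
        | succ k ih =>
          have hcast : ((k + 1 : ℕ) : Fin (m * n)) = (k : Fin (m * n)) + 1 := by
            push_cast; ring
          rw [hcast, cstep]; exact ih
      have h := key (i : ℕ)
      rwa [Fin.cast_val_eq_self] at h
    have hTsum : ∀ j : Fin n, (∑ i : Fin (m * n), B (i, j)) = T (j : ℕ) := by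
      intro j
      calc ∑ i : Fin (m * n), B (i, j)
          = ∑ i : Fin (m * n), g ^ (i : ℕ) * x ^ (j : ℕ) :=
            Finset.sum_congr rfl fun i _ => hB (i, j)
        _ = ∑ i ∈ Finset.range (m * n), g ^ i * x ^ (j : ℕ) :=
            Fin.sum_univ_eq_sum_range (fun i => g ^ i * x ^ (j : ℕ)) (m * n)
        _ = T (j : ℕ) := rfl
    have ht'T : t' = ∑ j : Fin n, c (0, j) • T (j : ℕ) := by
      rw [← hrepr, Fintype.sum_prod_type_right]
      refine Finset.sum_congr rfl fun j _ => ?_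
      rw [← hTsum j, Finset.smul_sum]
      refine Finset.sum_congr rfl fun i _ => ?_
      rw [cconst]
    have czero : ∀ j : Fin n, (j : ℕ) < n - 1 → c (0, j) = 0 := by
      intro j0 hj0
      have hxTb : ∀ j : Fin n, ∀ hjlt : (j : ℕ) < n - 1, x * T (j : ℕ)
          = ∑ i : Fin (m * n), q ^ (i : ℕ) • B (i, ⟨(j : ℕ) + 1, by omega⟩) := by
        intro j hjlt
        rw [xT, ← Fin.sum_univ_eq_sum_range
          (fun i => q ^ i • (g ^ i * x ^ ((j : ℕ) + 1))) (m * n)]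
        refine Finset.sum_congr rfl fun i _ => ?_
        rw [hB]
      have hφT : ∀ j : Fin n, B.coord (0, ⟨(j0 : ℕ) + 1, by omega⟩) (x * T (j : ℕ))
          = if j = j0 then 1 else 0 := by
        intro j
        rcases lt_or_ge (j : ℕ) (n - 1) with hlt | hge
        · rw [hxTb j hlt, map_sum]
          simp only [map_smul, Module.Basis.coord_apply, Module.Basis.repr_self, Finsupp.single_apply,
            smul_eq_mul, mul_ite, mul_one, mul_zero]
          by_cases hjj : j = j0
          · subst hjj
            rw [if_pos rfl]
            have hpair : ∀ i : Fin (m * n),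
                (((i, (⟨(j : ℕ) + 1, by omega⟩ : Fin n)) :
                  Fin (m * n) × Fin n) = (0, ⟨(j : ℕ) + 1, by omega⟩)) ↔ i = 0 := by
              intro i
              simp [Prod.ext_iff]
            simp only [hpair]
            rw [Finset.sum_ite_eq' Finset.univ (0 : Fin (m * n)) (fun i => q ^ (i : ℕ))]
            simp
          · rw [if_neg hjj]
            have hpair : ∀ i : Fin (m * n),
                ¬(((i, (⟨(j : ℕ) + 1, by omega⟩ : Fin n)) :
                  Fin (m * n) × Fin n) = (0, ⟨(j0 : ℕ) + 1, by omega⟩)) := by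
              intro i h
              apply hjj
              have h2 := congrArg Prod.snd h
              simp only at h2
              have : (j : ℕ) = (j0 : ℕ) := by
                have := congrArg Fin.val h2
                simpa using this
              exact Fin.ext this
            simp only [if_neg (hpair _)]
            simp
        · have hjv : (j : ℕ) = n - 1 := by
            have := j.isLt; omega
          have hTt : T (j : ℕ) = t := by rw [hjv, htT]
          rw [hTt, xt, map_zero]
          have : j ≠ j0 := by
            intro h; subst h; omega
          rw [if_neg this]
      have h0 : B.coord (0, ⟨(j0 : ℕ) + 1, by omega⟩) (x * t') = 0 := by
        rw [hx', map_zero]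
      rw [ht'T, Finset.mul_sum] at h0
      simp only [mul_smul_comm] at h0
      rw [map_sum] at h0
      simp only [map_smul, hφT, smul_eq_mul, mul_ite, mul_one, mul_zero] at h0
      rwa [Finset.sum_ite_eq' Finset.univ j0 (fun j => c (0, j)), if_pos (Finset.mem_univ _)]
        at h0
    rw [Submodule.mem_span_singleton]
    have final : t' = c (0, ⟨n - 1, by omega⟩) • t := by
      have hsum : ∑ j : Fin n, c (0, j) • T (j : ℕ)
          = c (0, ⟨n - 1, by omega⟩) • T (((⟨n - 1, by omega⟩ : Fin n)) : ℕ) := by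
        refine Finset.sum_eq_single_of_mem _ (Finset.mem_univ _) fun j _ hjne => ?_
        have hlt : (j : ℕ) < n - 1 := by
          have h1 := j.isLt
          have hne : (j : ℕ) ≠ n - 1 := fun h => hjne (Fin.ext h)
          omega
        rw [czero j hlt, zero_smul]
      rw [ht'T, hsum]
    exact ⟨_, final.symm⟩
  · intro hmem
    rw [Submodule.mem_span_singleton] at hmem
    obtain ⟨a, rfl⟩ := hmem
    intro h
    rw [mul_smul_comm, hint, smul_comm]
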